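/- arXiv:2202.01939 — 3 statements merged into one kernel-verified Lean document; each statement's English description precedes it below -/
import Mathlib

section
/- Let f(z) = z + Σ_{m=1}^{c} (1 + (z-1)e^z)^m/m. Then f is an entire function and its Taylor coefficients a_n (so f(z) = Σ a_n z^n) satisfy n! · a_n ~ c^{n-c-1} n^c as n → ∞. -/
/-!
Expanding `(1 + (z - 1) e^z)^m` binomially writes `f` as `z` plus a linear combination of the
functions `(z - 1)^k e^{kz}` with `k ≤ c`. By Leibniz, the `n`-th derivative at `0` of
`p(z) e^{az}` is `∑_j n(n-1)⋯(n-j+1) p_j a^(n-j)`, which is asymptotic to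
`lead(p) a^(n - deg p) n^(deg p)`, and is `o(a^n n^d)` if `a` is replaced by some `b` with
`‖b‖ ≤ ‖a‖` and `deg p < d`. So against `c^n n^c` only `(z - 1)^c e^{cz}` survives; it occurs
only for `m = c`, with coefficient `1/c`.
-/

open Filter Topology Polynomial Finset Asymptotics

namespace Polynomial

variable {𝕜 : Type*} [NontriviallyNormedField 𝕜]

theorem iteratedDeriv_eval (p : 𝕜[X]) (n : ℕ) :
    iteratedDeriv n (fun z => p.eval z) = fun z => (derivative^[n] p).eval z := by
  induction n generalizing p with
  | zero => rfl
  | succ n ih =>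
    have hderiv : _root_.deriv (fun z => p.eval z) = fun z => p.derivative.eval z := by
      ext x
      exact p.deriv
    rw [iteratedDeriv_succ', hderiv, ih, Function.iterate_succ_apply]

theorem iteratedDeriv_eval_zero (p : 𝕜[X]) (n : ℕ) :
    iteratedDeriv n (fun z => p.eval z) 0 = n.factorial * p.coeff n := by
  simp only [iteratedDeriv_eval, ← coeff_zero_eq_eval_zero, coeff_iterate_derivative, zero_add,
    Nat.descFactorial_self, nsmul_eq_mul]

end Polynomial

theorem iteratedDeriv_eval_mul_cexp_zero (p : ℂ[X]) (a : ℂ) (n : ℕ) :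
    iteratedDeriv n (fun z => p.eval z * Complex.exp (a * z)) 0 =
      ∑ j ∈ range (n + 1), (n.descFactorial j : ℂ) * p.coeff j * a ^ (n - j) := by
  have hexp : ContDiff ℂ n fun z => Complex.exp (a * z) := by fun_prop
  rw [iteratedDeriv_fun_mul p.differentiable.contDiff.contDiffAt hexp.contDiffAt]
  refine sum_congr rfl fun j _ => ?_
  rw [Polynomial.iteratedDeriv_eval_zero, iteratedDeriv_cexp_const_mul,
    Nat.descFactorial_eq_factorial_mul_choose]
  simp only [mul_zero, Complex.exp_zero, mul_one]
  push_cast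
  ring

theorem iteratedDeriv_eval_mul_cexp_zero_of_natDegree_le (p : ℂ[X]) (a : ℂ) {n : ℕ}
    (hn : p.natDegree ≤ n) :
    iteratedDeriv n (fun z => p.eval z * Complex.exp (a * z)) 0 =
      ∑ j ∈ range (p.natDegree + 1), (n.descFactorial j : ℂ) * p.coeff j * a ^ (n - j) := by
  rw [iteratedDeriv_eval_mul_cexp_zero]
  refine (sum_subset (range_subset_range.2 (by omega)) fun j _ hj => ?_).symm
  rw [coeff_eq_zero_of_natDegree_lt (by simpa using hj), mul_zero, zero_mul]

theorem tendsto_descFactorial_mul_pow_div_of_lt {a b : ℂ} (ha : a ≠ 0) (hba : ‖b‖ ≤ ‖a‖)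
    {j d : ℕ} (hjd : j < d) :
    Tendsto (fun n : ℕ => (n.descFactorial j : ℂ) * b ^ (n - j) / (a ^ n * (n : ℂ) ^ d))
      atTop (𝓝 0) := by
  have ha' : 0 < ‖a‖ := norm_pos_iff.2 ha
  have hbound : Tendsto (fun n : ℕ => (‖a‖ ^ j)⁻¹ * ((n : ℝ) ^ (d - j))⁻¹) atTop (𝓝 0) := by
    simpa using (tendsto_inv_atTop_zero.comp ((tendsto_pow_atTop (by omega)).comp
      tendsto_natCast_atTop_atTop)).const_mul (‖a‖ ^ j)⁻¹
  refine squeeze_zero_norm' ?_ hbound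
  filter_upwards [eventually_ge_atTop (max j 1)] with n hn
  have hjn : j ≤ n := le_of_max_le_left hn
  have hn0 : (0 : ℝ) < n := by exact_mod_cast (le_of_max_le_right hn)
  calc ‖(n.descFactorial j : ℂ) * b ^ (n - j) / (a ^ n * (n : ℂ) ^ d)‖
      ≤ (n : ℝ) ^ j * ‖a‖ ^ (n - j) / (‖a‖ ^ n * (n : ℝ) ^ d) := by
        rw [norm_div, norm_mul, norm_mul, norm_pow, norm_pow, norm_pow, Complex.norm_natCast,
          Complex.norm_natCast]
        gcongr
        exact_mod_cast Nat.descFactorial_le_pow n j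
    _ = (‖a‖ ^ j)⁻¹ * ((n : ℝ) ^ (d - j))⁻¹ := by
        rw [← Nat.sub_add_cancel hjn, ← Nat.sub_add_cancel hjd.le]
        simp only [Nat.add_sub_cancel, pow_add]
        field_simp

theorem tendsto_descFactorial_mul_pow_div_self {a : ℂ} (ha : a ≠ 0) (d : ℕ) :
    Tendsto (fun n : ℕ => (n.descFactorial d : ℂ) * a ^ (n - d) / (a ^ n * (n : ℂ) ^ d))
      atTop (𝓝 (a ^ d)⁻¹) := by
  have hratio : Tendsto (fun n : ℕ => ((n.descFactorial d / (n : ℝ) ^ d : ℝ) : ℂ)) atTop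
      (𝓝 ((1 : ℝ) : ℂ)) := by
    refine (Complex.continuous_ofReal.tendsto _).comp ?_
    refine (isEquivalent_iff_tendsto_one ?_).1 (isEquivalent_descFactorial d)
    filter_upwards [eventually_ge_atTop 1] with n hn
    positivity
  rw [← one_mul (a ^ d)⁻¹]
  refine (hratio.mul_const _).congr' ?_
  filter_upwards [eventually_ge_atTop d] with n hn
  rw [pow_sub₀ a ha hn]
  push_cast
  field_simp

theorem tendsto_iteratedDeriv_eval_mul_cexp_div_of_natDegree_lt {p : ℂ[X]} {a b : ℂ}
    (ha : a ≠ 0) (hba : ‖b‖ ≤ ‖a‖) {d : ℕ} (hp : p.natDegree < d) :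
    Tendsto (fun n : ℕ => iteratedDeriv n (fun z => p.eval z * Complex.exp (b * z)) 0 /
      (a ^ n * (n : ℂ) ^ d)) atTop (𝓝 0) := by
  have hterms : Tendsto (fun n : ℕ => ∑ j ∈ range (p.natDegree + 1),
      p.coeff j * ((n.descFactorial j : ℂ) * b ^ (n - j) / (a ^ n * (n : ℂ) ^ d)))
      atTop (𝓝 0) := by
    simpa using tendsto_finsetSum _ fun j hj => (tendsto_descFactorial_mul_pow_div_of_lt ha
      hba (lt_of_le_of_lt (Nat.lt_succ_iff.1 (mem_range.1 hj)) hp)).const_mul (p.coeff j)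
  refine hterms.congr' ?_
  filter_upwards [eventually_ge_atTop p.natDegree] with n hn
  rw [iteratedDeriv_eval_mul_cexp_zero_of_natDegree_le p b hn, sum_div]
  refine sum_congr rfl fun j _ => ?_
  ring

theorem tendsto_iteratedDeriv_eval_mul_cexp_div (p : ℂ[X]) {a : ℂ} (ha : a ≠ 0) :
    Tendsto (fun n : ℕ => iteratedDeriv n (fun z => p.eval z * Complex.exp (a * z)) 0 /
      (a ^ n * (n : ℂ) ^ p.natDegree)) atTop (𝓝 (p.leadingCoeff / a ^ p.natDegree)) := by
  set d := p.natDegree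
  have hlower : Tendsto (fun n : ℕ => ∑ j ∈ range d,
      p.coeff j * ((n.descFactorial j : ℂ) * a ^ (n - j) / (a ^ n * (n : ℂ) ^ d)))
      atTop (𝓝 0) := by
    simpa using tendsto_finsetSum _ fun j hj =>
      (tendsto_descFactorial_mul_pow_div_of_lt ha le_rfl (mem_range.1 hj)).const_mul (p.coeff j)
  have htop := (tendsto_descFactorial_mul_pow_div_self ha d).const_mul p.leadingCoeff
  rw [div_eq_mul_inv, ← zero_add (p.leadingCoeff * _)]
  refine (hlower.add htop).congr' ?_
  filter_upwards [eventually_ge_atTop d] with n hn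
  rw [iteratedDeriv_eval_mul_cexp_zero_of_natDegree_le p a hn, sum_range_succ, add_div, sum_div]
  congr 1
  · exact sum_congr rfl fun j _ => by ring
  · rw [leadingCoeff]; ring

theorem tendsto_iteratedDeriv_sub_one_pow_mul_cexp_div {c k : ℕ} (hc : c ≠ 0) (hkc : k ≤ c) :
    Tendsto (fun n : ℕ => iteratedDeriv n (fun z => (z - 1) ^ k * Complex.exp (k * z)) 0 /
      ((c : ℂ) ^ n * (n : ℂ) ^ c)) atTop (𝓝 (if k = c then ((c : ℂ) ^ c)⁻¹ else 0)) := by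
  have hc' : (c : ℂ) ≠ 0 := Nat.cast_ne_zero.2 hc
  have hfun : (fun z : ℂ => (z - 1) ^ k * Complex.exp (k * z)) =
      fun z => ((X - C 1 : ℂ[X]) ^ k).eval z * Complex.exp (k * z) := by
    simp
  have hdeg : ((X - C (1 : ℂ)) ^ k).natDegree = k := by
    rw [(monic_X_sub_C (1 : ℂ)).natDegree_pow, natDegree_X_sub_C, mul_one]
  rw [hfun]
  split_ifs with hk
  · subst hk
    have h := tendsto_iteratedDeriv_eval_mul_cexp_div ((X - C (1 : ℂ)) ^ k) hc'
    rwa [hdeg, ((monic_X_sub_C (1 : ℂ)).pow k).leadingCoeff, one_div] at h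
  · exact tendsto_iteratedDeriv_eval_mul_cexp_div_of_natDegree_lt hc' (by simpa using hkc)
      (hdeg.trans_lt (lt_of_le_of_ne hkc hk))

noncomputable def complexityFunction (c : ℕ) (z : ℂ) : ℂ :=
  z + ∑ m ∈ Icc 1 c, (1 + (z - 1) * Complex.exp z) ^ m / (m : ℂ)

theorem complexityFunction_eq (c : ℕ) :
    complexityFunction c = fun z => z + ∑ m ∈ Icc 1 c, ∑ k ∈ range (m + 1),
      (m.choose k / m : ℂ) * ((z - 1) ^ k * Complex.exp (k * z)) := by
  funext z
  unfold complexityFunction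
  congr 1
  refine sum_congr rfl fun m _ => ?_
  rw [add_comm (1 : ℂ), add_pow, sum_div]
  refine sum_congr rfl fun k _ => ?_
  rw [mul_pow, ← Complex.exp_nat_mul, one_pow, mul_one]
  ring

theorem differentiable_complexityFunction (c : ℕ) : Differentiable ℂ (complexityFunction c) := by
  unfold complexityFunction
  fun_prop

theorem iteratedDeriv_complexityFunction_zero (c n : ℕ) :
    iteratedDeriv n (complexityFunction c) 0 = (if n = 1 then 1 else 0) +
      ∑ m ∈ Icc 1 c, ∑ k ∈ range (m + 1), (m.choose k / m : ℂ) *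
        iteratedDeriv n (fun z => (z - 1) ^ k * Complex.exp (k * z)) 0 := by
  rw [complexityFunction_eq, iteratedDeriv_fun_add (f := fun z => z) (by fun_prop) (by fun_prop),
    iteratedDeriv_fun_id_zero, iteratedDeriv_fun_sum fun m _ => by fun_prop]
  congr 1
  refine sum_congr rfl fun m _ => ?_
  rw [iteratedDeriv_fun_sum fun k _ => by fun_prop]
  simp only [iteratedDeriv_const_mul_field]

theorem tendsto_iteratedDeriv_complexityFunction_div {c : ℕ} (hc : c ≠ 0) :
    Tendsto (fun n : ℕ => iteratedDeriv n (complexityFunction c) 0 / ((c : ℂ) ^ n * (n : ℂ) ^ c))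
      atTop (𝓝 ((c : ℂ) ^ (c + 1))⁻¹) := by
  have hid : Tendsto (fun n : ℕ => (if n = 1 then (1 : ℂ) else 0) / ((c : ℂ) ^ n * (n : ℂ) ^ c))
      atTop (𝓝 0) := by
    refine tendsto_const_nhds.congr' ?_
    filter_upwards [eventually_gt_atTop 1] with n hn
    simp [hn.ne']
  have hsum := tendsto_finsetSum (Icc 1 c) fun m hm => tendsto_finsetSum (range (m + 1))
    fun k hk => (tendsto_iteratedDeriv_sub_one_pow_mul_cexp_div hc
      ((Nat.lt_succ_iff.1 (mem_range.1 hk)).trans (mem_Icc.1 hm).2)).const_mul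
        (m.choose k / m : ℂ)
  have hlim : (0 : ℂ) + ∑ m ∈ Icc 1 c, ∑ k ∈ range (m + 1),
      (m.choose k / m : ℂ) * (if k = c then ((c : ℂ) ^ c)⁻¹ else 0) = ((c : ℂ) ^ (c + 1))⁻¹ := by
    simp only [mul_ite, mul_zero, sum_ite_eq', mem_range, zero_add]
    rw [sum_eq_single_of_mem c (by simp [Nat.one_le_iff_ne_zero.2 hc]) fun m hm hmc => if_neg
      (by have := (mem_Icc.1 hm).2; omega)]
    simp [pow_succ, mul_comm]
  rw [← hlim]
  refine (hid.add hsum).congr fun n => ?_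
  simp only [iteratedDeriv_complexityFunction_zero, add_div, sum_div, mul_div_assoc]

/-- Let `f(z) = z + ∑_{m=1}^{c} (1 + (z-1)e^z)^m/m`.  Then `f` is entire and
its Taylor coefficients `a_n` satisfy `n!·a_n ~ c^{n-c-1} n^c` as `n → ∞`
(note `n!·a_n = f^{(n)}(0)`). -/
theorem NcA_complexity_coefficient_asymptotic (c : ℕ) (hc : 1 ≤ c) :
    Differentiable ℂ
      (fun z : ℂ => z + ∑ m ∈ Finset.Icc 1 c,
        (1 + (z - 1) * Complex.exp z) ^ m / (m : ℂ)) ∧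
    Tendsto
      (fun n : ℕ =>
        iteratedDeriv n
            (fun z : ℂ => z + ∑ m ∈ Finset.Icc 1 c,
              (1 + (z - 1) * Complex.exp z) ^ m / (m : ℂ)) 0 /
          ((c : ℂ) ^ ((n : ℤ) - (c : ℤ) - 1) * (n : ℂ) ^ c))
      atTop (nhds 1) := by
  have hc0 : (c : ℂ) ^ (c + 1) ≠ 0 := pow_ne_zero _ (Nat.cast_ne_zero.2 (by omega))
  have hscale (n : ℕ) : (c : ℂ) ^ ((n : ℤ) - (c : ℤ) - 1) = (c : ℂ) ^ n / (c : ℂ) ^ (c + 1) := by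
    rw [← zpow_natCast, ← zpow_natCast, ← zpow_sub₀ (by simpa using hc0)]
    push_cast
    ring_nf
  have hlim := (tendsto_iteratedDeriv_complexityFunction_div (by omega : c ≠ 0)).const_mul
    ((c : ℂ) ^ (c + 1))
  rw [mul_inv_cancel₀ hc0] at hlim
  refine ⟨differentiable_complexityFunction c, hlim.congr fun n => ?_⟩
  change _ = iteratedDeriv n (complexityFunction c) 0 / _
  rw [hscale]
  field_simp
end

section
/- Let β₁(z) = Σ_{m=1}^{s₁} z^m/m and β_i(z) = β_{i-1}(z) + Σ_{m=1}^{s_i} (1 + (z-1)exp(β_{i-1}(z)))^m/m for 2 ≤ i ≤ q, with integers s_i ≥ 1 and q ≥ 2. Then the entire function f = β_q satisfies lim_{r→∞} ln^{(q-1)}(M_f(r)) / r^{s₁} = s₂/s₁, where M_f(r) = max_{|z|=r} |f(z)| and ln^{(j)} is the j-fold iterated logarithm. -/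
/-! On the positive axis `polyBeta s i` is the real recursion `realBeta (-1) s i`, and on the
circle `‖z‖ = r` the triangle inequality bounds it by `realBeta 1 s i r`, so the maximum modulus is
squeezed between two real recursions of the same shape. For each of them
`log β_{i+1} = s_{i+1} β_i + O(log r)` with `β_i ≥ r^{s₁}/s₁`, whence `log β_{i+1} / β_i → s_{i+1}`,
while `β_1 / r^{s₁} → 1/s₁`. A ratio of functions tending to `∞` that converges to a positive
constant becomes, after one logarithm, a ratio converging to `1`, and stays so under further
logarithms. Hence `ln^{(q-1)} β_q = ln^{(q-2)} (log β_q)` is asymptotic to `ln^{(q-2)} β_{q-1}`,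
and descending to `log β_2 / r^{s₁} → s₂/s₁` gives the limit. -/

noncomputable section

open Filter

/-- The recursively defined functions
`β₁(z) = ∑_{m=1}^{s₁} z^m/m`,
`β_i(z) = β_{i-1}(z) + ∑_{m=1}^{s_i} (1 + (z-1)·exp(β_{i-1}(z)))^m/m`.
Here `polyBeta s 0 = 0` and the recursion gives `polyBeta s i = β_i`
(noting `exp(0) = 1`, so `polyBeta s 1 = ∑_{m=1}^{s 1} z^m/m = β₁`). -/
def polyBeta (s : ℕ → ℕ) : ℕ → ℂ → ℂ
  | 0, _ => 0
  | i + 1, z => polyBeta s i z +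
      ∑ m ∈ Finset.Icc 1 (s (i + 1)),
        (1 + (z - 1) * Complex.exp (polyBeta s i z)) ^ m / (m : ℂ)

/-- The `j`-fold iterated natural logarithm. -/
def iterLog : ℕ → ℝ → ℝ
  | 0, x => x
  | j + 1, x => Real.log (iterLog j x)

/-- The maximum modulus `M_f(r) = max_{|z| = r} |f(z)|`. -/
def maxModulus (f : ℂ → ℂ) (r : ℝ) : ℝ :=
  sSup ((fun z => ‖f z‖) '' Metric.sphere (0 : ℂ) r)

open Topology Asymptotics

section IterLog

variable {α : Type*} {l : Filter α}

lemma iterLog_succ' (n : ℕ) (x : ℝ) : iterLog (n + 1) x = iterLog n (Real.log x) := by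
  induction n with
  | zero => rfl
  | succ n ih => exact congrArg Real.log ih

lemma tendsto_iterLog_atTop (n : ℕ) {v : α → ℝ} (hv : Tendsto v l atTop) :
    Tendsto (fun x => iterLog n (v x)) l atTop := by
  induction n with
  | zero => exact hv
  | succ n ih => exact Real.tendsto_log_atTop.comp ih

lemma eventually_iterLog_pos {v : α → ℝ} (hv : Tendsto v l atTop) (n : ℕ) :
    ∀ᶠ x in l, ∀ j < n, 0 < iterLog j (v x) := by
  induction n with
  | zero => exact .of_forall fun _ j hj => absurd hj j.not_lt_zero
  | succ n ih =>
    filter_upwards [ih, (tendsto_iterLog_atTop n hv).eventually_gt_atTop 0] with x hlt hn j hj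
    rcases Nat.lt_succ_iff_lt_or_eq.1 hj with hj | rfl
    exacts [hlt j hj, hn]

lemma iterLog_le_iterLog {n : ℕ} {x y : ℝ} (hx : ∀ j < n, 0 < iterLog j x) (hxy : x ≤ y) :
    iterLog n x ≤ iterLog n y := by
  induction n with
  | zero => exact hxy
  | succ n ih =>
    exact Real.log_le_log (hx n n.lt_succ_self) (ih fun j hj => hx j (hj.trans n.lt_succ_self))

lemma tendsto_log_div_log_of_tendsto_div {u v : α → ℝ} {c : ℝ} (hv : Tendsto v l atTop)
    (hc : 0 < c) (huv : Tendsto (fun x => u x / v x) l (𝓝 c)) :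
    Tendsto (fun x => Real.log (u x) / Real.log (v x)) l (𝓝 1) := by
  have hlogv : Tendsto (fun x => Real.log (v x)) l atTop := Real.tendsto_log_atTop.comp hv
  have hsum : Tendsto (fun x => Real.log (u x / v x) / Real.log (v x) + 1) l (𝓝 (0 + 1)) :=
    (((Real.continuousAt_log hc.ne').tendsto.comp huv).div_atTop hlogv).add_const 1
  rw [zero_add] at hsum
  refine hsum.congr' ?_
  filter_upwards [huv.eventually (lt_mem_nhds hc), hv.eventually_gt_atTop 0,
    hlogv.eventually_gt_atTop 0] with x huv_pos hv_pos hlogv_pos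
  have hu : u x ≠ 0 := fun h => by simp [h] at huv_pos
  rw [Real.log_div hu hv_pos.ne', sub_div, div_self hlogv_pos.ne', sub_add_cancel]

lemma tendsto_iterLog_div_iterLog {u v : α → ℝ} {c : ℝ} (hv : Tendsto v l atTop)
    (hc : 0 < c) (huv : Tendsto (fun x => u x / v x) l (𝓝 c)) (n : ℕ) :
    Tendsto (fun x => iterLog (n + 1) (u x) / iterLog (n + 1) (v x)) l (𝓝 1) := by
  induction n with
  | zero => exact tendsto_log_div_log_of_tendsto_div hv hc huv
  | succ n ih =>
    exact tendsto_log_div_log_of_tendsto_div (tendsto_iterLog_atTop _ hv) one_pos ih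

end IterLog

lemma Real.isLittleO_log_add_const_id (c : ℝ) :
    (fun r => Real.log (r + c)) =o[atTop] (id : ℝ → ℝ) :=
  (Real.isLittleO_log_id_atTop.comp_tendsto (tendsto_atTop_add_const_right _ c tendsto_id))
    |>.trans_isBigO ((isBigO_refl (id : ℝ → ℝ) _).add (isLittleO_const_id_atTop c).isBigO)

section MaxModulus

variable {f : ℂ → ℂ}

lemma norm_le_maxModulus (hf : Continuous f) (z : ℂ) : ‖f z‖ ≤ maxModulus f ‖z‖ :=
  le_csSup ((isCompact_sphere 0 ‖z‖).image (continuous_norm.comp hf)).bddAbove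
    ⟨z, by simp, rfl⟩

lemma maxModulus_le {r C : ℝ} (hr : 0 ≤ r) (h : ∀ z : ℂ, ‖z‖ = r → ‖f z‖ ≤ C) :
    maxModulus f r ≤ C :=
  csSup_le ((NormedSpace.sphere_nonempty.2 hr).image _) <| by
    rintro _ ⟨z, hz, rfl⟩
    exact h z (by simpa using hz)

end MaxModulus

section PowerSums

lemma pow_div_le_sum_Icc_pow_div {t : ℝ} (ht : 0 ≤ t) {p : ℕ} (hp : 1 ≤ p) :
    t ^ p / p ≤ ∑ m ∈ Finset.Icc 1 p, t ^ m / m :=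
  Finset.single_le_sum (f := fun m : ℕ => t ^ m / (m : ℝ)) (fun m _ => by positivity)
    (Finset.mem_Icc.2 ⟨hp, le_rfl⟩)

lemma sum_Icc_pow_div_le {t : ℝ} (ht : 1 ≤ t) (p : ℕ) :
    ∑ m ∈ Finset.Icc 1 p, t ^ m / m ≤ p * t ^ p := by
  have hterm : ∀ m ∈ Finset.Icc 1 p, t ^ m / m ≤ t ^ p := fun m hm => by
    obtain ⟨hm1, hmp⟩ := Finset.mem_Icc.1 hm
    calc t ^ m / m ≤ t ^ m := div_le_self (by positivity) (by exact_mod_cast hm1)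
      _ ≤ t ^ p := pow_le_pow_right₀ ht hmp
  simpa using Finset.sum_le_card_nsmul _ _ _ hterm

lemma tendsto_add_const_pow_div_pow (c : ℝ) {m p : ℕ} (hmp : m ≤ p) :
    Tendsto (fun r : ℝ => (r + c) ^ m / r ^ p) atTop (𝓝 (if m = p then 1 else 0)) := by
  have hratio : Tendsto (fun r : ℝ => 1 + c * r⁻¹) atTop (𝓝 1) := by
    simpa using (tendsto_inv_atTop_zero.const_mul c).const_add 1
  have hpow : Tendsto (fun r : ℝ => r ^ m / r ^ p) atTop (𝓝 (if m = p then 1 else 0)) := by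
    rcases hmp.eq_or_lt with rfl | hlt
    · simpa using tendsto_const_nhds.congr' <|
        (eventually_gt_atTop 0).mono fun r hr => (div_self (pow_pos hr m).ne').symm
    · simpa [hlt.ne] using tendsto_pow_div_pow_atTop_zero hlt
  have hprod := (hratio.pow m).mul hpow
  rw [one_pow, one_mul] at hprod
  refine hprod.congr' <| (eventually_gt_atTop 0).mono fun r hr => ?_
  rw [show 1 + c * r⁻¹ = (r + c) / r by field_simp, div_pow]
  field_simp

lemma tendsto_sum_Icc_add_const_pow_div_pow (c : ℝ) {p : ℕ} (hp : 1 ≤ p) :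
    Tendsto (fun r : ℝ => (∑ m ∈ Finset.Icc 1 p, (r + c) ^ m / m) / r ^ p) atTop
      (𝓝 (1 / p)) := by
  have hterm : ∀ m ∈ Finset.Icc 1 p, Tendsto (fun r : ℝ => (r + c) ^ m / m / r ^ p) atTop
      (𝓝 (if m = p then 1 / (p : ℝ) else 0)) := fun m hm => by
    have h := (tendsto_add_const_pow_div_pow c (Finset.mem_Icc.1 hm).2).div_const (m : ℝ)
    split_ifs at h ⊢ with hmp
    · subst hmp
      simpa only [div_right_comm] using h
    · simpa only [div_right_comm, zero_div] using h
  have hsum := tendsto_finsetSum _ hterm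
  rw [Finset.sum_ite_eq' _ _ (fun _ => 1 / (p : ℝ)), if_pos (Finset.mem_Icc.2 ⟨hp, le_rfl⟩)]
    at hsum
  simpa only [Finset.sum_div] using hsum

end PowerSums

/-- `realBeta (-1) s` is the restriction of `polyBeta s` to the real axis, and `realBeta 1 s`
majorises `‖polyBeta s‖` on circles. -/
def realBeta (a : ℝ) (s : ℕ → ℕ) : ℕ → ℝ → ℝ
  | 0, _ => 0
  | i + 1, r => realBeta a s i r +
      ∑ m ∈ Finset.Icc 1 (s (i + 1)), (1 + (r + a) * Real.exp (realBeta a s i r)) ^ m / m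

namespace realBeta

variable {a r : ℝ} {s : ℕ → ℕ} {i : ℕ}

lemma succ_eq (a : ℝ) (s : ℕ → ℕ) (i : ℕ) (r : ℝ) :
    realBeta a s (i + 1) r = realBeta a s i r +
      ∑ m ∈ Finset.Icc 1 (s (i + 1)), (1 + (r + a) * Real.exp (realBeta a s i r)) ^ m / m :=
  rfl

lemma one_eq (a : ℝ) (s : ℕ → ℕ) (r : ℝ) :
    realBeta a s 1 r = ∑ m ∈ Finset.Icc 1 (s 1), (r + (1 + a)) ^ m / m := by
  simp only [realBeta, Real.exp_zero, mul_one, zero_add, add_left_comm]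

lemma nonneg (hr : 0 ≤ r + a) : ∀ i, 0 ≤ realBeta a s i r
  | 0 => le_rfl
  | i + 1 => by
    have := nonneg hr i
    rw [succ_eq]
    positivity

lemma le_succ (hr : 0 ≤ r + a) (i : ℕ) : realBeta a s i r ≤ realBeta a s (i + 1) r := by
  have := nonneg (s := s) hr i
  rw [succ_eq]
  exact le_add_of_nonneg_right (by positivity)

lemma pow_div_le (ha : -1 ≤ a) (hs1 : 1 ≤ s 1) (hr : 1 ≤ r) (hi : 1 ≤ i) :
    r ^ s 1 / s 1 ≤ realBeta a s i r := by
  induction i, hi using Nat.le_induction with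
  | base =>
    rw [one_eq]
    calc r ^ s 1 / s 1 ≤ (r + (1 + a)) ^ s 1 / s 1 := by gcongr; linarith
      _ ≤ _ := pow_div_le_sum_Icc_pow_div (by linarith) hs1
  | succ i _ ih => exact ih.trans (le_succ (by linarith) i)

lemma tendsto_atTop (ha : -1 ≤ a) (hs1 : 1 ≤ s 1) (hi : 1 ≤ i) :
    Tendsto (realBeta a s i) atTop atTop :=
  tendsto_atTop_mono' _ ((eventually_ge_atTop 1).mono fun _ hr => pow_div_le ha hs1 hr hi) <|
    (tendsto_pow_atTop (by omega)).atTop_div_const (by exact_mod_cast hs1)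

lemma tendsto_one_div_pow (a : ℝ) (hs1 : 1 ≤ s 1) :
    Tendsto (fun r => realBeta a s 1 r / r ^ s 1) atTop (𝓝 (1 / s 1)) := by
  simpa only [one_eq] using tendsto_sum_Icc_add_const_pow_div_pow (1 + a) hs1

open Real in
lemma abs_log_succ_sub_le (hp : 1 ≤ s (i + 1)) (hr : 1 ≤ r + a) :
    |log (realBeta a s (i + 1) r) - s (i + 1) * realBeta a s i r| ≤
      s (i + 1) * log (r + a + 1) + log (s (i + 1) + 1) + log (s (i + 1)) := by
  set p := s (i + 1)
  set g := realBeta a s i r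
  set t := 1 + (r + a) * exp g
  have hp' : (1 : ℝ) ≤ p := by exact_mod_cast hp
  have hp0 : (0 : ℝ) < p := by linarith
  have hg : 0 ≤ g := nonneg (by linarith) i
  have hexp_le : exp g ≤ t := by nlinarith [exp_pos g]
  have hle_exp : t ≤ (r + a + 1) * exp g := by nlinarith [one_le_exp hg]
  have ht : 1 ≤ t := (one_le_exp hg).trans hexp_le
  have ht0 : 0 < t := by linarith
  have hlog_t : g ≤ log t ∧ log t ≤ g + log (r + a + 1) := by
    constructor
    · simpa using log_le_log (exp_pos g) hexp_le
    · have h := log_le_log (by positivity) hle_exp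
      rwa [log_mul (by positivity) (exp_ne_zero g), log_exp, add_comm] at h
  have hsucc : realBeta a s (i + 1) r = g + ∑ m ∈ Finset.Icc 1 p, t ^ m / m := succ_eq a s i r
  have hlow : t ^ p / p ≤ realBeta a s (i + 1) r := by
    rw [hsucc]
    exact le_add_of_nonneg_of_le hg (pow_div_le_sum_Icc_pow_div (by positivity) hp)
  have hup : realBeta a s (i + 1) r ≤ (p + 1) * t ^ p := by
    have hg_le : g ≤ t ^ p :=
      calc g ≤ exp g := (add_one_le_exp g).trans' (by linarith)
        _ ≤ t := hexp_le
        _ ≤ t ^ p := le_self_pow₀ ht (by omega)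
    rw [hsucc]
    linarith [sum_Icc_pow_div_le ht p]
  have hR0 : 0 < realBeta a s (i + 1) r := hlow.trans_lt' (by positivity)
  have hlog_low : p * log t - log p ≤ log (realBeta a s (i + 1) r) := by
    simpa [log_div, log_pow, ht0.ne', hp0.ne']
      using log_le_log (by positivity) hlow
  have hlog_up : log (realBeta a s (i + 1) r) ≤ log (p + 1) + p * log t := by
    simpa [log_mul, log_pow, ht0.ne', (by positivity : (0 : ℝ) < p + 1).ne']
      using log_le_log hR0 hup
  have := mul_le_mul_of_nonneg_left hlog_t.1 (by positivity : (0 : ℝ) ≤ p)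
  have := mul_le_mul_of_nonneg_left hlog_t.2 (by positivity : (0 : ℝ) ≤ p)
  have := log_nonneg hp'
  have := log_nonneg (by linarith : (1 : ℝ) ≤ p + 1)
  rw [abs_le]
  constructor <;> linarith

lemma id_isBigO (ha : -1 ≤ a) (hs1 : 1 ≤ s 1) (hi : 1 ≤ i) :
    (id : ℝ → ℝ) =O[atTop] realBeta a s i := by
  refine IsBigO.of_bound (s 1) ((eventually_ge_atTop 1).mono fun r hr => ?_)
  have hpow := pow_div_le ha hs1 hr hi
  rw [div_le_iff₀' (by exact_mod_cast hs1)] at hpow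
  rw [id_eq, Real.norm_eq_abs, Real.norm_eq_abs, abs_of_nonneg (by linarith : (0 : ℝ) ≤ r),
    abs_of_nonneg (nonneg (by linarith) i)]
  exact (le_self_pow₀ hr (by omega)).trans hpow

open Real in
lemma tendsto_log_succ_div (ha : -1 ≤ a) (hs1 : 1 ≤ s 1) (hi : 1 ≤ i) (hp : 1 ≤ s (i + 1)) :
    Tendsto (fun r => log (realBeta a s (i + 1) r) / realBeta a s i r) atTop
      (𝓝 (s (i + 1))) := by
  have herr : (fun r => s (i + 1) * log (r + (a + 1)) + (log (s (i + 1) + 1) + log (s (i + 1))))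
      =o[atTop] (id : ℝ → ℝ) :=
    ((isLittleO_log_add_const_id _).const_mul_left _).add (isLittleO_const_id_atTop _)
  have hdiff : (fun r => log (realBeta a s (i + 1) r) - s (i + 1) * realBeta a s i r)
      =o[atTop] realBeta a s i := by
    refine (IsBigO.of_bound' ?_).trans_isLittleO (herr.trans_isBigO (id_isBigO ha hs1 hi))
    filter_upwards [eventually_ge_atTop (1 - a)] with r hr
    have h := abs_log_succ_sub_le (s := s) hp (by linarith : 1 ≤ r + a)
    rw [add_assoc r a 1, add_assoc (_ * _)] at h
    exact h.trans (le_abs_self _)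
  have hsum := hdiff.tendsto_div_nhds_zero.const_add (s (i + 1) : ℝ)
  rw [add_zero] at hsum
  refine hsum.congr' ?_
  filter_upwards [(tendsto_atTop ha hs1 hi).eventually_gt_atTop 0] with r hr
  field_simp
  ring

lemma tendsto_iterLog_div_pow (ha : -1 ≤ a) (k : ℕ)
    (hs : ∀ i, 1 ≤ i → i ≤ k + 2 → 1 ≤ s i) :
    Tendsto (fun r => iterLog (k + 1) (realBeta a s (k + 2) r) / r ^ s 1) atTop
      (𝓝 (s 2 / s 1)) := by
  have hs1 : 1 ≤ s 1 := hs 1 le_rfl (by omega)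
  induction k with
  | zero =>
    have h := (tendsto_log_succ_div ha hs1 le_rfl (hs 2 (by omega) le_rfl)).mul
      (tendsto_one_div_pow a hs1)
    rw [mul_one_div] at h
    refine h.congr' ?_
    filter_upwards [(tendsto_atTop ha hs1 le_rfl).eventually_gt_atTop 0] with r hr
    exact div_mul_div_cancel₀ hr.ne'
  | succ k ih =>
    have hv := tendsto_atTop ha hs1 (i := k + 2) (by omega)
    have hp : 1 ≤ s (k + 3) := hs (k + 3) (by omega) le_rfl
    have hratio := tendsto_iterLog_div_iterLog hv (by exact_mod_cast hp)
      (tendsto_log_succ_div ha hs1 (by omega) hp) k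
    have h := hratio.mul (ih (fun i h1 h2 => hs i h1 (by omega)))
    rw [one_mul] at h
    refine h.congr' ?_
    filter_upwards [(tendsto_iterLog_atTop (k + 1) hv).eventually_gt_atTop 0] with r hr
    rw [iterLog_succ' (k + 1)]
    exact div_mul_div_cancel₀ hr.ne'

end realBeta

section PolyBeta

variable (s : ℕ → ℕ)

lemma polyBeta_ofReal (i : ℕ) (r : ℝ) : polyBeta s i r = realBeta (-1) s i r := by
  induction i with
  | zero => simp [polyBeta, realBeta]
  | succ i ih =>
    rw [polyBeta, ih, realBeta.succ_eq]
    push_cast [Complex.ofReal_exp]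
    ring_nf

lemma continuous_polyBeta (i : ℕ) : Continuous (polyBeta s i) := by
  induction i with
  | zero => exact continuous_const
  | succ i ih => exact ih.add (continuous_finsetSum _ fun m _ => by fun_prop)

lemma norm_polyBeta_le (i : ℕ) (z : ℂ) : ‖polyBeta s i z‖ ≤ realBeta 1 s i ‖z‖ := by
  induction i with
  | zero => simp [polyBeta, realBeta]
  | succ i ih =>
    have hw : ‖1 + (z - 1) * Complex.exp (polyBeta s i z)‖ ≤
        1 + (‖z‖ + 1) * Real.exp (realBeta 1 s i ‖z‖) :=
      calc _ ≤ 1 + ‖z - 1‖ * ‖Complex.exp (polyBeta s i z)‖ := by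
            rw [← norm_mul, ← norm_one (α := ℂ)]
            exact norm_add_le _ _
        _ ≤ _ := by
            gcongr
            · simpa using norm_sub_le z 1
            · exact (Complex.norm_exp_le_exp_norm _).trans (Real.exp_le_exp.2 ih)
    rw [polyBeta, realBeta.succ_eq]
    refine (norm_add_le _ _).trans (add_le_add ih ((norm_sum_le _ _).trans
      (Finset.sum_le_sum fun m _ => ?_)))
    rw [norm_div, norm_pow, Complex.norm_natCast]
    gcongr

variable {s}

lemma realBeta_le_maxModulus {r : ℝ} (hr : 0 ≤ r) (i : ℕ) :
    realBeta (-1) s i r ≤ maxModulus (polyBeta s i) r := by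
  have h := norm_le_maxModulus (continuous_polyBeta s i) r
  rw [polyBeta_ofReal, Complex.norm_real, Complex.norm_real, Real.norm_of_nonneg hr] at h
  exact (le_abs_self _).trans h

lemma maxModulus_le_realBeta {r : ℝ} (hr : 0 ≤ r) (i : ℕ) :
    maxModulus (polyBeta s i) r ≤ realBeta 1 s i r :=
  maxModulus_le hr fun z hz => hz ▸ norm_polyBeta_le s i z

end PolyBeta

/-- For the entire function `f = β_q` (the complexity function of the
polynilpotent variety `N_{s_q}⋯N_{s₁}` of Lie algebras, `q ≥ 2`, `s_i ≥ 1`),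
`lim_{r→∞} ln^{(q-1)}(M_f(r)) / r^{s₁} = s₂/s₁`. -/
theorem polynilpotent_complexity_growth (q : ℕ) (hq : 2 ≤ q) (s : ℕ → ℕ)
    (hs : ∀ i, 1 ≤ i → i ≤ q → 1 ≤ s i) :
    Tendsto
      (fun r : ℝ => iterLog (q - 1) (maxModulus (polyBeta s q) r) / r ^ (s 1))
      atTop (nhds ((s 2 : ℝ) / (s 1 : ℝ))) := by
  obtain ⟨k, rfl⟩ := Nat.exists_eq_add_of_le' hq
  rw [show k + 2 - 1 = k + 1 by omega]
  have hs1 : 1 ≤ s 1 := hs 1 le_rfl (by omega)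
  have hpos := eventually_iterLog_pos
    (realBeta.tendsto_atTop (a := -1) le_rfl hs1 (i := k + 2) (by omega)) (k + 1)
  refine tendsto_of_tendsto_of_tendsto_of_le_of_le'
    (realBeta.tendsto_iterLog_div_pow le_rfl k hs)
    (realBeta.tendsto_iterLog_div_pow (a := 1) (by norm_num) k hs) ?_ ?_
  all_goals
    filter_upwards [hpos, eventually_ge_atTop 0] with r hr_pos hr
    gcongr
  · exact iterLog_le_iterLog hr_pos (realBeta_le_maxModulus hr _)
  · refine iterLog_le_iterLog (fun j hj => ?_) (maxModulus_le_realBeta hr _)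
    exact (hr_pos j hj).trans_le <| iterLog_le_iterLog (fun j' hj' => hr_pos j' (hj'.trans hj))
      (realBeta_le_maxModulus hr _)

end
end

section
/- Let A be an associative algebra over a field satisfying a nontrivial multilinear polynomial identity of degree d. Then its codimension sequence satisfies c_n(A) ≤ ((d-1)²)^n for all n ≥ 1. -/
/-!
Write the identity as `∑ c_σ x_{σ(0)} ⋯ x_{σ(d-1)}` with `c_τ ≠ 0`. If the word of a permutation
of `{0, …, n-1}` has a decreasing subsequence of length `d`, cut it in front of each of these `d`
letters into a prefix `u` and blocks `b_0, …, b_{d-1}`. Substituting `x_i ↦ b_{τ⁻¹(i)}` into the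
identity and multiplying by `u` rewrites the monomial, modulo the identities, as a combination of
the monomials with the blocks permuted nontrivially, and these are lexicographically smaller since
the blocks start with decreasing letters. So modulo the identities `P_n` is spanned by the
monomials of permutations with no decreasing subsequence of length `d`. Such a permutation is
increasing on each set of positions from which the longest decreasing subsequence has a given
length `< d - 1`, so it is determined by these lengths at all positions and at all values: there
are at most `((d-1)^2)^n` of them.
-/

noncomputable section

variable (K : Type) [Field K]

/-- The multilinear part `P_n` of the free associative algebra on countably
many generators `x_0, x_1, …`: the span of the products
`x_{σ(0)} x_{σ(1)} ⋯ x_{σ(n-1)}` over all permutations `σ`. -/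
def assocMultilinearPart (n : ℕ) : Submodule K (FreeAlgebra K ℕ) :=
  Submodule.span K
    { y | ∃ σ : Equiv.Perm (Fin n),
        y = (List.ofFn fun i => FreeAlgebra.ι K (((σ i : Fin n) : ℕ))).prod }

/-- The identities of an associative algebra `A`, as a subspace of the free
associative algebra on countably many generators. -/
def assocIdentitiesOf (A : Type*) [Ring A] [Algebra K A] :
    Submodule K (FreeAlgebra K ℕ) :=
  Submodule.span K { f | ∀ φ : FreeAlgebra K ℕ →ₐ[K] A, φ f = 0 }

/-- The `n`-th multilinear codimension of an associative algebra `A`. -/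
def assocCodimOf (A : Type*) [Ring A] [Algebra K A] (n : ℕ) : ℕ :=
  Module.finrank K
    (Submodule.map (assocIdentitiesOf K A).mkQ (assocMultilinearPart K n))

open Finset

lemma StrictMonoOn.eqOn_of_image_eq {α β : Type*} [LinearOrder α] [LinearOrder β]
    {s : Finset α} {f g : α → β} (hf : StrictMonoOn f s) (hg : StrictMonoOn g s)
    (h : s.image f = s.image g) : Set.EqOn f g s := by
  have hcard : (s.image f).card = s.card := card_image_of_injOn hf.injOn
  set e := s.orderEmbOfFin rfl
  have hmem (x : Fin s.card) : e x ∈ s := s.orderEmbOfFin_mem rfl x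
  have hfe : f ∘ e = (s.image f).orderEmbOfFin hcard :=
    orderEmbOfFin_unique hcard (fun x => mem_image_of_mem f (hmem x))
      fun a b hab => hf (hmem a) (hmem b) (e.strictMono hab)
  have hge : g ∘ e = (s.image f).orderEmbOfFin hcard :=
    orderEmbOfFin_unique hcard (fun x => h ▸ mem_image_of_mem g (hmem x))
      fun a b hab => hg (hmem a) (hmem b) (e.strictMono hab)
  intro x hx
  obtain ⟨i, rfl⟩ : x ∈ Set.range e := by rw [range_orderEmbOfFin]; exact hx
  exact congrFun (hfe.trans hge.symm) i

lemma Equiv.Perm.exists_lt_apply_of_ne_one {α : Type*} [LinearOrder α] [Fintype α]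
    {ρ : Equiv.Perm α} (hρ : ρ ≠ 1) : ∃ k, k < ρ k ∧ ∀ i < k, ρ i = i := by
  have hne : ρ.support.Nonempty := by simpa [Finset.nonempty_iff_ne_empty] using hρ
  have hk := mem_support.1 (ρ.support.min'_mem hne)
  have hfix (i : α) (hi : i < ρ.support.min' hne) : ρ i = i :=
    not_not.1 fun h => (ρ.support.min'_le i (mem_support.2 h)).not_gt hi
  exact ⟨_, lt_of_le_of_ne (not_lt.1 fun hlt => hk (ρ.injective (hfix _ hlt))) hk.symm, hfix⟩

namespace List

lemma exists_eq_append_flatten_ofFn_cons {α : Type*} {d : ℕ} (w : List α) (p : Fin d → ℕ)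
    (hp : StrictMono p) (hlt : ∀ j, p j < w.length) :
    ∃ (u : List α) (t : Fin d → List α),
      w = u ++ (ofFn fun j => w[p j]'(hlt j) :: t j).flatten := by
  induction d generalizing w with
  | zero => exact ⟨w, Fin.elim0, by simp⟩
  | succ d ih =>
    set q := p (Fin.last d)
    have hq : q < w.length := hlt _
    have hlt' (j : Fin d) : p j.castSucc < (w.take q).length := by
      simpa using ⟨hp (Fin.castSucc_lt_last j), (hp (Fin.castSucc_lt_last j)).trans hq⟩
    obtain ⟨u, t, hu⟩ := ih (w.take q) (p ∘ Fin.castSucc) (hp.comp Fin.strictMono_castSucc) hlt'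
    refine ⟨u, Fin.snoc t (w.drop (q + 1)), ?_⟩
    rw [ofFn_succ', concat_eq_append, flatten_append]
    simp only [Fin.snoc_castSucc, Fin.snoc_last, flatten_cons, flatten_nil,
      append_nil]
    conv_lhs => rw [← take_append_drop q w, hu, drop_eq_getElem_cons hq]
    simp only [append_assoc, Function.comp_apply, getElem_take]
    rfl

lemma ofFn_eq_take_append_cons_drop {β : Type*} {d : ℕ} (f : Fin d → β) (k : Fin d) :
    ofFn f = (ofFn f).take k ++ f k :: (ofFn f).drop (k + 1) := by
  conv_lhs => rw [← take_append_drop k (ofFn f),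
    drop_eq_getElem_cons (by simp)]
  simp

lemma flatten_ofFn_comp_perm_lt {α : Type*} [LinearOrder α] {d : ℕ} {a : Fin d → α}
    (ha : StrictAnti a) (t : Fin d → List α) {ρ : Equiv.Perm (Fin d)} (hρ : ρ ≠ 1) :
    (ofFn fun j => a (ρ j) :: t (ρ j)).flatten < (ofFn fun j => a j :: t j).flatten := by
  obtain ⟨k, hk, hfix⟩ := ρ.exists_lt_apply_of_ne_one hρ
  have htake : (ofFn fun j => a (ρ j) :: t (ρ j)).take k
      = (ofFn fun j => a j :: t j).take k := by
    apply ext_getElem (by simp)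
    intro i hi _
    simp only [length_take, length_ofFn] at hi
    simp [hfix ⟨i, by omega⟩ (Fin.mk_lt_of_lt_val (by omega))]
  conv_lhs => rw [ofFn_eq_take_append_cons_drop _ k, htake]
  conv_rhs => rw [ofFn_eq_take_append_cons_drop _ k]
  simp only [flatten_append, flatten_cons, cons_append]
  exact Lex.append_left _ (Lex.rel (ha hk)) _

end List

namespace Equiv.Perm

variable {n : ℕ}

def HasDecreasingSubseq (σ : Equiv.Perm (Fin n)) (k : ℕ) : Prop :=
  ∃ s : Fin k → Fin n, StrictMono s ∧ StrictAnti (σ ∘ s)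

def HasDecreasingSubseqFrom (σ : Equiv.Perm (Fin n)) (i : Fin n) (k : ℕ) : Prop :=
  ∃ s : Fin (k + 1) → Fin n, StrictMono s ∧ StrictAnti (σ ∘ s) ∧ s 0 = i

open Classical in
def decreasingDepth (σ : Equiv.Perm (Fin n)) (i : Fin n) : ℕ :=
  Nat.findGreatest (HasDecreasingSubseqFrom σ i) n

variable {σ : Equiv.Perm (Fin n)}

lemma hasDecreasingSubseqFrom_decreasingDepth (σ : Equiv.Perm (Fin n)) (i : Fin n) :
    HasDecreasingSubseqFrom σ i (decreasingDepth σ i) := by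
  classical
  exact Nat.findGreatest_spec (Nat.zero_le n)
    ⟨![i], Subsingleton.strictMono (α := Fin 1) _, Subsingleton.strictAnti (α := Fin 1) _, rfl⟩

lemma decreasingDepth_add_one_lt {d : ℕ} (hσ : ¬ HasDecreasingSubseq σ d) (i : Fin n) :
    decreasingDepth σ i + 1 < d := by
  by_contra! hd
  obtain ⟨s, hs, hσs, -⟩ := hasDecreasingSubseqFrom_decreasingDepth σ i
  exact hσ ⟨s ∘ Fin.castLE hd, hs.comp (Fin.strictMono_castLE hd),
    hσs.comp_strictMono (Fin.strictMono_castLE hd)⟩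

lemma decreasingDepth_lt_of_lt {i j : Fin n} (hij : i < j) (hσ : σ j < σ i) :
    decreasingDepth σ j < decreasingDepth σ i := by
  obtain ⟨s, hs, hσs, hs0⟩ := hasDecreasingSubseqFrom_decreasingDepth σ j
  have hlong : StrictMono (Matrix.vecCons i s) ∧ StrictAnti (σ ∘ Matrix.vecCons i s) := by
    rw [show σ ∘ Matrix.vecCons i s = Matrix.vecCons (σ i) (σ ∘ s) from Fin.comp_cons _ _ _]
    exact ⟨strictMono_vecCons.2 ⟨hs0.symm ▸ hij, hs⟩,
      strictAnti_vecCons.2 ⟨by simpa [hs0] using hσ, hσs⟩⟩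
  have hcard : decreasingDepth σ j + 1 + 1 ≤ n := by
    simpa using Fintype.card_le_of_injective _ hlong.1.injective
  classical
  exact Nat.le_findGreatest (by omega) ⟨_, hlong.1, hlong.2, rfl⟩

lemma strictMonoOn_setOf_decreasingDepth_eq (σ : Equiv.Perm (Fin n)) (k : ℕ) :
    StrictMonoOn σ {j | decreasingDepth σ j = k} := by
  intro i hi j hj hij
  refine lt_of_le_of_ne (not_lt.1 fun hlt => ?_) (σ.injective.ne hij.ne)
  exact (decreasingDepth_lt_of_lt hij hlt).ne (hj.trans hi.symm)

lemma eq_of_decreasingDepth_eq {σ τ : Equiv.Perm (Fin n)}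
    (hpos : ∀ i, decreasingDepth σ i = decreasingDepth τ i)
    (hval : ∀ v, decreasingDepth σ (σ⁻¹ v) = decreasingDepth τ (τ⁻¹ v)) : σ = τ := by
  ext i : 1
  set level : Finset (Fin n) := {j | decreasingDepth σ j = decreasingDepth σ i}
  have hσ : StrictMonoOn σ level := by
    simpa [level] using strictMonoOn_setOf_decreasingDepth_eq σ (decreasingDepth σ i)
  have hτ : StrictMonoOn τ level := by
    simpa [level, hpos] using strictMonoOn_setOf_decreasingDepth_eq τ (decreasingDepth τ i)
  have himage : level.image σ = level.image τ := by
    ext v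
    simp only [level, mem_image, mem_filter, mem_univ, true_and]
    constructor
    · rintro ⟨j, hj, rfl⟩
      refine ⟨τ⁻¹ (σ j), ?_, by simp⟩
      rwa [hpos, ← hval, coe_inv, symm_apply_apply]
    · rintro ⟨j, hj, rfl⟩
      refine ⟨σ⁻¹ (τ j), ?_, by simp⟩
      rwa [hval, coe_inv, symm_apply_apply, ← hpos]
  exact hσ.eqOn_of_image_eq hτ himage (by simp [level])

open Classical in
theorem card_filter_not_hasDecreasingSubseq_le (n d : ℕ) :
    #{σ : Equiv.Perm (Fin n) | ¬ σ.HasDecreasingSubseq d} ≤ ((d - 1) ^ 2) ^ n := by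
  let depths (σ : Equiv.Perm (Fin n)) (i : Fin n) : ℕ × ℕ :=
    (σ.decreasingDepth i, σ.decreasingDepth (σ⁻¹ i))
  have hmaps : ∀ σ ∈ ({σ | ¬ σ.HasDecreasingSubseq d} : Finset (Equiv.Perm (Fin n))),
      depths σ ∈ Fintype.piFinset fun _ => range (d - 1) ×ˢ range (d - 1) := by
    intro σ hσ
    simp only [mem_filter, mem_univ, true_and] at hσ
    simp only [Fintype.mem_piFinset, mem_product, mem_range, depths]
    exact fun i => ⟨by have := decreasingDepth_add_one_lt hσ i; omega,
      by have := decreasingDepth_add_one_lt hσ (σ⁻¹ i); omega⟩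
  have hinj : Set.InjOn depths {σ | ¬ σ.HasDecreasingSubseq d} := fun σ _ τ _ h =>
    eq_of_decreasingDepth_eq (fun i => congrArg Prod.fst (congrFun h i))
      (fun v => congrArg Prod.snd (congrFun h v))
  calc _ ≤ #(Fintype.piFinset fun _ : Fin n => range (d - 1) ×ˢ range (d - 1)) :=
        card_le_card_of_injOn depths hmaps (by simpa using hinj)
    _ = ((d - 1) ^ 2) ^ n := by simp [sq]

def word (σ : Equiv.Perm (Fin n)) : List ℕ := List.ofFn fun i => (σ i : ℕ)

lemma exists_word_eq_of_perm {σ : Equiv.Perm (Fin n)} {v : List ℕ} (hv : v.Perm σ.word) :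
    ∃ τ : Equiv.Perm (Fin n), τ.word = v := by
  have hnodup : v.Nodup :=
    hv.nodup_iff.2 (List.nodup_ofFn.2 (Fin.val_injective.comp σ.injective))
  have hlen : v.length = n := by simpa [word] using hv.length_eq
  have hlt (i : Fin n) : v[(i : ℕ)] < n := by
    have hi : (i : ℕ) < v.length := by omega
    obtain ⟨j, hj⟩ := List.mem_ofFn.1 (hv.subset (List.getElem_mem hi))
    exact hj ▸ (σ j).isLt
  let f (i : Fin n) : Fin n := ⟨v[(i : ℕ)], hlt i⟩
  have hf : Function.Injective f := fun i j hij =>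
    Fin.ext ((hnodup.getElem_inj_iff).1 (congrArg Fin.val hij))
  refine ⟨Equiv.ofBijective f (Finite.injective_iff_bijective.1 hf), ?_⟩
  exact List.ext_getElem (by simp [word, hlen]) fun i _ _ => by simp [word, f]

lemma exists_word_eq_append_flatten_of_hasDecreasingSubseq {σ : Equiv.Perm (Fin n)} {d : ℕ}
    (hσ : σ.HasDecreasingSubseq d) :
    ∃ (u : List ℕ) (a : Fin d → ℕ) (t : Fin d → List ℕ),
      StrictAnti a ∧ σ.word = u ++ (List.ofFn fun j => a j :: t j).flatten := by
  obtain ⟨s, hs, hσs⟩ := hσ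
  have hlt (j : Fin d) : (s j : ℕ) < σ.word.length := by simp [word]
  obtain ⟨u, t, hu⟩ := σ.word.exists_eq_append_flatten_ofFn_cons _ hs hlt
  refine ⟨u, fun j => σ.word[(s j : ℕ)]'(hlt j), t, fun i j hij => ?_, hu⟩
  simpa [word] using hσs hij

end Equiv.Perm

lemma Submodule.mem_span_image_ne_of_sum_smul_eq_zero {ι F V : Type*} [Fintype ι] [Field F]
    [AddCommGroup V] [Module F V] {c : ι → F} {v : ι → V} (h : ∑ i, c i • v i = 0) {j : ι}
    (hj : c j ≠ 0) : v j ∈ Submodule.span F (v '' {i | i ≠ j}) := by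
  classical
  have hsplit : c j • v j = -∑ i ∈ univ.erase j, c i • v i :=
    eq_neg_of_add_eq_zero_left ((add_sum_erase univ (fun i => c i • v i) (mem_univ j)).trans h)
  rw [← inv_smul_smul₀ hj (v j), hsplit]
  refine Submodule.smul_mem _ _ (Submodule.neg_mem _ (Submodule.sum_mem _ fun i hi => ?_))
  exact Submodule.smul_mem _ _ (Submodule.subset_span ⟨i, ne_of_mem_erase hi, rfl⟩)

section Identities

def freeMonomial (l : List ℕ) : FreeAlgebra K ℕ := (l.map (FreeAlgebra.ι K)).prod

lemma freeMonomial_append (u v : List ℕ) :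
    freeMonomial K (u ++ v) = freeMonomial K u * freeMonomial K v := by
  simp [freeMonomial]

lemma freeMonomial_flatten (L : List (List ℕ)) :
    freeMonomial K L.flatten = (L.map (freeMonomial K)).prod := by
  induction L with
  | nil => simp [freeMonomial]
  | cons l L ih => simp [freeMonomial_append, ih]

lemma assocMultilinearPart_eq_span (n : ℕ) :
    assocMultilinearPart K n =
      Submodule.span K (Set.range fun σ : Equiv.Perm (Fin n) => freeMonomial K σ.word) := by
  simp only [assocMultilinearPart, freeMonomial, Equiv.Perm.word, List.map_ofFn]
  congr 1
  ext y
  exact ⟨fun ⟨σ, h⟩ => ⟨σ, h.symm⟩, fun ⟨σ, h⟩ => ⟨σ, h.symm⟩⟩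

variable {K} {A : Type*} [Ring A] [Algebra K A]

lemma mem_assocIdentitiesOf {f : FreeAlgebra K ℕ} :
    f ∈ assocIdentitiesOf K A ↔ ∀ φ : FreeAlgebra K ℕ →ₐ[K] A, φ f = 0 := by
  refine ⟨fun hf φ => ?_, fun h => Submodule.subset_span h⟩
  have hker : assocIdentitiesOf K A ≤ LinearMap.ker φ.toLinearMap :=
    Submodule.span_le.2 fun g hg => hg φ
  exact hker hf

lemma mul_map_mem_assocIdentitiesOf (x : FreeAlgebra K ℕ)
    (ψ : FreeAlgebra K ℕ →ₐ[K] FreeAlgebra K ℕ) {f : FreeAlgebra K ℕ}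
    (hf : f ∈ assocIdentitiesOf K A) : x * ψ f ∈ assocIdentitiesOf K A := by
  rw [mem_assocIdentitiesOf] at hf ⊢
  intro φ
  rw [map_mul, ← AlgHom.comp_apply, hf, mul_zero]

lemma mkQ_freeMonomial_mem_span_permuted_blocks {d : ℕ} {c : Equiv.Perm (Fin d) → K}
    {τ : Equiv.Perm (Fin d)} (hτ : c τ ≠ 0)
    (hI : ∑ σ, c σ • freeMonomial K σ.word ∈ assocIdentitiesOf K A)
    (u : List ℕ) (b : Fin d → List ℕ) :
    (assocIdentitiesOf K A).mkQ (freeMonomial K (u ++ (List.ofFn b).flatten)) ∈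
      Submodule.span K ((fun ρ : Equiv.Perm (Fin d) => (assocIdentitiesOf K A).mkQ
        (freeMonomial K (u ++ (List.ofFn (b ∘ ρ)).flatten))) '' {ρ | ρ ≠ 1}) := by
  set π := (assocIdentitiesOf K A).mkQ
  let χ : FreeAlgebra K ℕ →ₐ[K] FreeAlgebra K ℕ :=
    FreeAlgebra.lift K fun i => if h : i < d then freeMonomial K (b (τ⁻¹ ⟨i, h⟩)) else 0
  have hχ (σ : Equiv.Perm (Fin d)) :
      χ (freeMonomial K σ.word) = freeMonomial K (List.ofFn (b ∘ ⇑(τ⁻¹ * σ))).flatten := by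
    rw [freeMonomial_flatten, freeMonomial, Equiv.Perm.word, map_list_prod, List.map_ofFn,
      List.map_ofFn, List.map_ofFn]
    congr 2
    funext i
    simp [χ]
  have hsum : ∑ σ, c σ • π (freeMonomial K (u ++ (List.ofFn (b ∘ ⇑(τ⁻¹ * σ))).flatten)) = 0 := by
    have := mul_map_mem_assocIdentitiesOf (freeMonomial K u) χ hI
    simp only [map_sum, mul_sum, map_smul, hχ, mul_smul_comm, ← freeMonomial_append] at this
    rw [← (Submodule.Quotient.mk_eq_zero _)] at this
    simp only [← map_smul, ← map_sum]
    exact this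
  have hmem := Submodule.mem_span_image_ne_of_sum_smul_eq_zero hsum hτ
  simp only [inv_mul_cancel, Equiv.Perm.coe_one, Function.comp_id] at hmem
  refine Submodule.span_mono ?_ hmem
  rintro _ ⟨σ, hσ, rfl⟩
  exact ⟨τ⁻¹ * σ, fun h => hσ (inv_mul_eq_one.1 h).symm, rfl⟩

lemma mkQ_freeMonomial_word_mem_span {d : ℕ} {c : Equiv.Perm (Fin d) → K}
    {τ : Equiv.Perm (Fin d)} (hτ : c τ ≠ 0)
    (hI : ∑ σ, c σ • freeMonomial K σ.word ∈ assocIdentitiesOf K A) {n : ℕ}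
    (σ : Equiv.Perm (Fin n)) :
    (assocIdentitiesOf K A).mkQ (freeMonomial K σ.word) ∈
      Submodule.span K ((fun σ : Equiv.Perm (Fin n) =>
          (assocIdentitiesOf K A).mkQ (freeMonomial K σ.word)) ''
        {σ | ¬ σ.HasDecreasingSubseq d}) := by
  set π := (assocIdentitiesOf K A).mkQ
  set S := Submodule.span K
    ((fun σ : Equiv.Perm (Fin n) => π (freeMonomial K σ.word)) '' {σ | ¬ σ.HasDecreasingSubseq d})
  suffices ∀ v ∈ Set.range (Equiv.Perm.word (n := n)), π (freeMonomial K v) ∈ S from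
    this _ ⟨σ, rfl⟩
  intro v hv
  refine (Set.finite_range _).wellFoundedOn.induction (r := (· < ·))
    (P := fun v => π (freeMonomial K v) ∈ S) hv ?_
  rintro _ ⟨σ, rfl⟩ ih
  by_cases hσ : σ.HasDecreasingSubseq d
  · obtain ⟨u, a, t, ha, hw⟩ := Equiv.Perm.exists_word_eq_append_flatten_of_hasDecreasingSubseq hσ
    rw [hw]
    refine Submodule.span_le.2 ?_ (mkQ_freeMonomial_mem_span_permuted_blocks hτ hI u _)
    rintro _ ⟨ρ, hρ, rfl⟩
    have hperm : (u ++ (List.ofFn ((fun j => a j :: t j) ∘ ρ)).flatten).Perm σ.word :=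
      hw ▸ ((ρ.ofFn_comp_perm _).flatten.append_left u)
    exact ih _ (Equiv.Perm.exists_word_eq_of_perm hperm)
      (hw ▸ List.append_left_lt (List.flatten_ofFn_comp_perm_lt ha t hρ))
  · exact Submodule.subset_span ⟨σ, hσ, rfl⟩

open Classical in
lemma assocCodimOf_le_card_filter_not_hasDecreasingSubseq {d : ℕ} {c : Equiv.Perm (Fin d) → K}
    {τ : Equiv.Perm (Fin d)} (hτ : c τ ≠ 0)
    (hI : ∑ σ, c σ • freeMonomial K σ.word ∈ assocIdentitiesOf K A) (n : ℕ) :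
    assocCodimOf K A n ≤ #{σ : Equiv.Perm (Fin n) | ¬ σ.HasDecreasingSubseq d} := by
  let good : Finset (FreeAlgebra K ℕ ⧸ assocIdentitiesOf K A) :=
    image (fun σ : Equiv.Perm (Fin n) => (assocIdentitiesOf K A).mkQ (freeMonomial K σ.word))
      {σ | ¬ σ.HasDecreasingSubseq d}
  have hle : (assocMultilinearPart K n).map (assocIdentitiesOf K A).mkQ ≤
      Submodule.span K (good : Set _) := by
    rw [assocMultilinearPart_eq_span, Submodule.map_span, Submodule.span_le]
    rintro _ ⟨_, ⟨σ, rfl⟩, rfl⟩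
    simpa [good] using mkQ_freeMonomial_word_mem_span hτ hI σ
  calc assocCodimOf K A n
        ≤ Set.finrank K (good : Set (FreeAlgebra K ℕ ⧸ assocIdentitiesOf K A)) := by
        exact Submodule.finrank_mono hle
    _ ≤ #good := finrank_span_finset_le_card good
    _ ≤ _ := card_image_le

lemma exists_coeff_ne_zero_sum_mem_assocIdentitiesOf {d : ℕ} {f : FreeAlgebra K ℕ}
    (hf : f ∈ assocMultilinearPart K d) (hne : f ≠ 0)
    (hid : ∀ φ : FreeAlgebra K ℕ →ₐ[K] A, φ f = 0) :
    ∃ (c : Equiv.Perm (Fin d) → K) (τ : Equiv.Perm (Fin d)),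
      c τ ≠ 0 ∧ ∑ σ, c σ • freeMonomial K σ.word ∈ assocIdentitiesOf K A := by
  rw [assocMultilinearPart_eq_span, Submodule.mem_span_range_iff_exists_fun] at hf
  obtain ⟨c, rfl⟩ := hf
  obtain ⟨τ, hτ⟩ : ∃ τ, c τ ≠ 0 := by
    by_contra! h
    simp [h] at hne
  exact ⟨c, τ, hτ, mem_assocIdentitiesOf.2 hid⟩

end Identities

theorem regev_latyshev_codim_bound (A : Type*) [Ring A] [Algebra K A]
    (d : ℕ)
    (hid : ∃ f ∈ assocMultilinearPart K d, f ≠ 0 ∧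
      ∀ φ : FreeAlgebra K ℕ →ₐ[K] A, φ f = 0) :
    ∀ n : ℕ, 1 ≤ n → assocCodimOf K A n ≤ ((d - 1) ^ 2) ^ n := by
  obtain ⟨f, hf, hne, hfid⟩ := hid
  obtain ⟨c, τ, hτ, hI⟩ := exists_coeff_ne_zero_sum_mem_assocIdentitiesOf hf hne hfid
  intro n _
  classical
  exact (assocCodimOf_le_card_filter_not_hasDecreasingSubseq hτ hI n).trans
    (Equiv.Perm.card_filter_not_hasDecreasingSubseq_le n d)

end
end
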